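/- Let x ∈ ℓ∞ be the 0–1 sequence with x_n = 1 if 4^k ≤ n < 2·4^k for some integer k ≥ 0, and x_n = 0 otherwise. Then for every extended limit γ on ℓ∞, the Banach limit B defined by Bx = log(2) · γ( n ↦ (1/n) Σ_{k=0}^∞ x_{k+1} 2^{−k/n} ) satisfies 1/3 ≤ Bx ≤ 2/3. -/

import Mathlib

open Filter BoundedContinuousFunction

noncomputable section

/-- `ℓ∞`: the space of bounded real sequences (indexed from `0`). -/
abbrev LInf : Type := BoundedContinuousFunction ℕ ℝ

/-- The translation (shift) operator `T(x₁,x₂,…) = (0,x₁,x₂,…)` (0-indexed). -/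
def shift (x : LInf) : LInf :=
  BoundedContinuousFunction.ofNormedAddCommGroup
    (fun n => if n = 0 then 0 else x (n - 1)) continuous_of_discreteTopology ‖x‖
    (by
      intro n
      rcases n with _ | n
      · simp [norm_nonneg x]
      · simpa using x.norm_coe_le_norm n)

/-- A Banach limit: a positive, normalised, shift-invariant continuous linear
functional on `ℓ∞`. -/
def IsBanachLimit (B : LInf →L[ℝ] ℝ) : Prop :=
  (∀ x : LInf, (∀ n, 0 ≤ x n) → 0 ≤ B x) ∧ B 1 = 1 ∧ ∀ x : LInf, B (shift x) = B x

/-- An extended limit: a positive continuous linear functional on `ℓ∞` which agrees with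
the limit on every convergent sequence. -/
def IsExtendedLimit (γ : LInf →L[ℝ] ℝ) : Prop :=
  (∀ x : LInf, (∀ n, 0 ≤ x n) → 0 ≤ γ x) ∧
    ∀ (x : LInf) (a : ℝ), Filter.Tendsto (fun n => x n) Filter.atTop (nhds a) → γ x = a

/-- The 0–1 sequence whose (1-indexed) `n`-th entry is `1` iff `4^k ≤ n < 2·4^k` for
some `k ≥ 0` (here 0-indexed: the entry at index `n` is for `n + 1`). -/
def zx : LInf :=
  BoundedContinuousFunction.ofNormedAddCommGroup
    (Set.indicator {n : ℕ | ∃ k : ℕ, 4 ^ k ≤ n + 1 ∧ n + 1 < 2 * 4 ^ k} (fun _ => (1 : ℝ)))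
    continuous_of_discreteTopology 1
    (by
      intro n
      by_cases h : n ∈ {n : ℕ | ∃ k : ℕ, 4 ^ k ≤ n + 1 ∧ n + 1 < 2 * 4 ^ k} <;>
        simp [Set.indicator, h])

/-!
`zx` is the indicator of the disjoint blocks `4^j ≤ k < 2·4^j`, so its generating function is
`∑ₖ zxₖ rᵏ = ψ(r) / (r (1 - r))` with `ψ(s) = ∑ⱼ (s^(4^j) - s^(2·4^j))`. The series `ψ(s)` and
`ψ(s²)` interleave into the telescoping series `∑ⱼ (s^(4^j) - s^(4^(j+1))) = s`, while termwise
`ψ(s²) ≤ 2 ψ(s)`; hence `1/3 ≤ ψ(r)/r ≤ 2/(3√r)`. For `r = 2^(-1/N)` one has `r → 1` and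
`N (1 - r) → log 2`, so the `N`-th average `ψ(r) / (r · N (1 - r))` is squeezed between sequences
tending to `1/(3 log 2)` and `2/(3 log 2)`, and the positivity of `γ` passes these bounds on.
-/

open Topology Function

theorem hasSum_sub_succ_of_antitone {u : ℕ → ℝ} (hu : Antitone u) {l : ℝ}
    (hl : Tendsto u atTop (𝓝 l)) : HasSum (fun n ↦ u n - u (n + 1)) (u 0 - l) := by
  rw [hasSum_iff_tendsto_nat_of_nonneg fun n ↦ sub_nonneg.2 (hu n.le_succ)]
  simp_rw [Finset.sum_range_sub']
  exact tendsto_const_nhds.sub hl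

theorem Summable.tsum_iUnion_of_pairwise_disjoint {ι β E : Type*} [AddCommGroup E]
    [UniformSpace E] [IsUniformAddGroup E] [CompleteSpace E] [T0Space E] {f : β → E}
    (hf : Summable f) {t : ι → Set β} (ht : Pairwise (Disjoint on t)) :
    ∑' b : ⋃ i, t i, f b = ∑' i, ∑' b : t i, f b := by
  rw [← (Set.unionEqSigmaOfDisjoint ht).symm.tsum_eq]
  exact ((hf.subtype _).comp_injective (Set.unionEqSigmaOfDisjoint ht).symm.injective).tsum_sigma

theorem hasDerivAt_two_rpow_neg : HasDerivAt (fun t : ℝ ↦ (2 : ℝ) ^ (-t)) (-Real.log 2) 0 := by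
  have := (Real.hasStrictDerivAt_const_rpow two_pos (-0)).hasDerivAt.comp 0 (hasDerivAt_neg 0)
  simpa [comp_def] using this

namespace IsExtendedLimit

variable {γ : LInf →L[ℝ] ℝ} (hγ : IsExtendedLimit γ) {x : LInf} {b : ℝ}
include hγ

theorem map_le_of_eventually_le (h : ∀ᶠ n in atTop, x n ≤ b) : γ x ≤ b := by
  have hsup : γ (x ⊔ const ℕ b) = b :=
    hγ.2 _ _ (tendsto_const_nhds.congr' (h.mono fun n hn ↦ by simp [hn]))
  have hpos := hγ.1 (x ⊔ const ℕ b - x) fun n ↦ by simp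
  rw [map_sub] at hpos
  linarith

theorem map_le_of_le_of_tendsto {u : ℕ → ℝ} (h : ∀ᶠ n in atTop, x n ≤ u n)
    (hu : Tendsto u atTop (𝓝 b)) : γ x ≤ b :=
  le_of_forall_gt_imp_ge_of_dense fun _c hc ↦
    hγ.map_le_of_eventually_le ((h.and (hu.eventually_lt_const hc)).mono fun _ hn ↦
      hn.1.trans hn.2.le)

theorem le_map_of_tendsto_of_le {u : ℕ → ℝ} (h : ∀ᶠ n in atTop, u n ≤ x n)
    (hu : Tendsto u atTop (𝓝 b)) : b ≤ γ x := by
  have := hγ.map_le_of_le_of_tendsto (x := -x) (h.mono fun n hn ↦ by simpa using hn) hu.neg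
  rw [map_neg] at this
  linarith

end IsExtendedLimit

namespace LacunaryZeta

def psi (s : ℝ) : ℝ := ∑' j : ℕ, (s ^ 4 ^ j - s ^ (2 * 4 ^ j))

section Psi

variable {s : ℝ}

lemma antitone_pow_four_pow (h0 : 0 ≤ s) (h1 : s ≤ 1) : Antitone fun j : ℕ ↦ s ^ 4 ^ j :=
  fun _ _ hij ↦ pow_le_pow_of_le_one h0 h1 (Nat.pow_le_pow_right (by norm_num) hij)

lemma hasSum_pow_four_pow_sub (h0 : 0 ≤ s) (h1 : s < 1) :
    HasSum (fun j : ℕ ↦ s ^ 4 ^ j - s ^ 4 ^ (j + 1)) s := by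
  have hlim : Tendsto (fun j : ℕ ↦ s ^ 4 ^ j) atTop (𝓝 0) :=
    (tendsto_pow_atTop_nhds_zero_of_lt_one h0 h1).comp
      (tendsto_pow_atTop_atTop_of_one_lt (α := ℕ) (by norm_num))
  simpa using hasSum_sub_succ_of_antitone (antitone_pow_four_pow h0 h1.le) hlim

lemma summable_psi (h0 : 0 ≤ s) (h1 : s < 1) :
    Summable fun j : ℕ ↦ s ^ 4 ^ j - s ^ (2 * 4 ^ j) := by
  refine (hasSum_pow_four_pow_sub h0 h1).summable.of_nonneg_of_le (fun j ↦ ?_) (fun j ↦ ?_)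
  · exact sub_nonneg.2 (pow_le_pow_of_le_one h0 h1.le (by omega))
  · exact sub_le_sub_left (pow_le_pow_of_le_one h0 h1.le (by rw [pow_succ]; omega)) _

lemma pow_two_mul_four_pow (j : ℕ) : s ^ (2 * 4 ^ j) = (s ^ 4 ^ j) ^ 2 := by
  rw [← pow_mul, mul_comm]

lemma pow_four_pow_succ (j : ℕ) : s ^ 4 ^ (j + 1) = (s ^ 4 ^ j) ^ 4 := by
  rw [← pow_mul, pow_succ]

lemma sq_pow_four_pow (j : ℕ) : (s ^ 2) ^ 4 ^ j - (s ^ 2) ^ (2 * 4 ^ j)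
    = s ^ (2 * 4 ^ j) - s ^ 4 ^ (j + 1) := by
  rw [← pow_mul, ← pow_mul, pow_succ, show 2 * (2 * 4 ^ j) = 4 ^ j * 4 by ring]

lemma psi_add_psi_sq (h0 : 0 ≤ s) (h1 : s < 1) : psi s + psi (s ^ 2) = s := by
  have h0' : 0 ≤ s ^ 2 := sq_nonneg s
  have h1' : s ^ 2 < 1 := by nlinarith
  rw [psi, psi, ← (summable_psi h0 h1).tsum_add (summable_psi h0' h1')]
  refine (tsum_congr fun j ↦ ?_).trans (hasSum_pow_four_pow_sub h0 h1).tsum_eq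
  rw [sq_pow_four_pow]
  ring

lemma psi_sq_le (h0 : 0 ≤ s) (h1 : s < 1) : psi (s ^ 2) ≤ 2 * psi s := by
  have h0' : 0 ≤ s ^ 2 := sq_nonneg s
  have h1' : s ^ 2 < 1 := by nlinarith
  rw [psi, psi, ← tsum_mul_left]
  refine (summable_psi h0' h1').tsum_le_tsum (fun j ↦ ?_) ((summable_psi h0 h1).mul_left 2)
  obtain ⟨hb0, hb1⟩ : 0 ≤ s ^ 4 ^ j ∧ s ^ 4 ^ j ≤ 1 := ⟨pow_nonneg h0 _, pow_le_one₀ h0 h1.le⟩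
  rw [sq_pow_four_pow, pow_two_mul_four_pow, pow_four_pow_succ]
  nlinarith [mul_nonneg (mul_nonneg hb0 (sub_nonneg.2 hb1)) (sub_nonneg.2 hb1)]

end Psi

def block (j : ℕ) : Finset ℕ := Finset.Ico (4 ^ j - 1) (2 * 4 ^ j - 1)

lemma mem_block {j k : ℕ} : k ∈ block j ↔ 4 ^ j ≤ k + 1 ∧ k + 1 < 2 * 4 ^ j := by
  have := Nat.one_le_pow j 4 (by norm_num)
  rw [block, Finset.mem_Ico]
  omega

lemma pairwise_disjoint_block : Pairwise (Disjoint on fun j ↦ (block j : Set ℕ)) := by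
  suffices ∀ i j, i < j → Disjoint (block i : Set ℕ) (block j) from
    fun i j hij ↦ hij.lt_or_gt.elim (this i j) fun h ↦ (this j i h).symm
  intro i j hij
  rw [Finset.disjoint_coe, Finset.disjoint_left]
  intro k hki hkj
  have : 4 * 4 ^ i ≤ 4 ^ j := by rw [← pow_succ']; exact Nat.pow_le_pow_right (by norm_num) hij
  rw [mem_block] at hki hkj
  omega

lemma coe_zx : ⇑zx = (⋃ j, (block j : Set ℕ)).indicator 1 := by
  have : ⋃ j, (block j : Set ℕ) = {n | ∃ k : ℕ, 4 ^ k ≤ n + 1 ∧ n + 1 < 2 * 4 ^ k} := by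
    ext n
    simp [mem_block]
  rw [this]
  rfl

lemma tsum_block_pow {r : ℝ} (h0 : 0 < r) (h1 : r < 1) (j : ℕ) :
    ∑ k ∈ block j, r ^ k = (r ^ 4 ^ j - r ^ (2 * 4 ^ j)) / (r * (1 - r)) := by
  have := Nat.one_le_pow j 4 (by norm_num)
  rw [block, geom_sum_Ico' h1.ne (by omega), pow_sub₀ _ h0.ne' (by omega),
    pow_sub₀ _ h0.ne' (by omega)]
  field_simp

lemma tsum_zx_mul_pow {r : ℝ} (h0 : 0 < r) (h1 : r < 1) :
    ∑' k, zx k * r ^ k = psi r / (r * (1 - r)) := by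
  have hsum : Summable fun k : ℕ ↦ r ^ k := summable_geometric_of_lt_one h0.le h1
  calc ∑' k, zx k * r ^ k = ∑' k : ⋃ j, (block j : Set ℕ), r ^ (k : ℕ) := by
        rw [tsum_subtype, coe_zx]
        congr 1 with k
        by_cases hk : k ∈ ⋃ j, (block j : Set ℕ) <;> simp [hk]
    _ = ∑' j, ∑ k ∈ block j, r ^ k := by
        rw [hsum.tsum_iUnion_of_pairwise_disjoint pairwise_disjoint_block]
        simp_rw [Finset.tsum_subtype']
    _ = psi r / (r * (1 - r)) := by
        simp_rw [tsum_block_pow h0 h1, psi, tsum_div_const]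

lemma third_le_psi_div {r : ℝ} (h0 : 0 < r) (h1 : r < 1) : 1 / 3 ≤ psi r / r := by
  rw [le_div_iff₀ h0]
  linarith [psi_add_psi_sq h0.le h1, psi_sq_le h0.le h1]

lemma psi_div_le {r : ℝ} (h0 : 0 < r) (h1 : r < 1) : psi r / r ≤ 2 / 3 / √r := by
  obtain ⟨t, ht0, rfl⟩ : ∃ t, 0 < t ∧ t ^ 2 = r := ⟨√r, by positivity, Real.sq_sqrt h0.le⟩
  have ht1 : t < 1 := by nlinarith
  rw [Real.sqrt_sq ht0.le, div_le_div_iff₀ (by positivity) ht0]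
  nlinarith [psi_add_psi_sq ht0.le ht1, psi_sq_le ht0.le ht1]

def ratio (n : ℕ) : ℝ := 2 ^ (-1 / ((n : ℝ) + 1))

lemma ratio_pos (n : ℕ) : 0 < ratio n := Real.rpow_pos_of_pos two_pos _

lemma ratio_lt_one (n : ℕ) : ratio n < 1 :=
  Real.rpow_lt_one_of_one_lt_of_neg one_lt_two (div_neg_of_neg_of_pos (by norm_num) (by positivity))

lemma two_rpow_neg_div (n k : ℕ) : (2 : ℝ) ^ (-(k : ℝ) / ((n : ℝ) + 1)) = ratio n ^ k := by
  rw [ratio, ← Real.rpow_natCast, ← Real.rpow_mul zero_le_two]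
  ring_nf

lemma tendsto_ratio : Tendsto ratio atTop (𝓝 1) := by
  have := hasDerivAt_two_rpow_neg.continuousAt.tendsto.comp
    (tendsto_one_div_add_atTop_nhds_zero_nat (𝕜 := ℝ))
  rw [neg_zero, Real.rpow_zero] at this
  refine this.congr fun n ↦ ?_
  simp [ratio, neg_div]

lemma tendsto_mul_one_sub_ratio :
    Tendsto (fun n : ℕ ↦ ((n : ℝ) + 1) * (1 - ratio n)) atTop (𝓝 (Real.log 2)) := by
  have ht : Tendsto (fun n : ℕ ↦ 1 / ((n : ℝ) + 1)) atTop (𝓝[>] 0) :=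
    tendsto_nhdsWithin_iff.2 ⟨tendsto_one_div_add_atTop_nhds_zero_nat,
      Eventually.of_forall fun n ↦ by simp only [Set.mem_Ioi]; positivity⟩
  have := (hasDerivAt_two_rpow_neg.tendsto_slope_zero_right.comp ht).neg
  rw [neg_neg] at this
  refine this.congr fun n ↦ ?_
  simp only [zero_add, neg_zero, Real.rpow_zero, smul_eq_mul, one_div, comp_apply, inv_inv, ratio,
    neg_div]
  ring

def zeta (x : LInf) (n : ℕ) : ℝ :=
  ((n : ℝ) + 1)⁻¹ * ∑' k : ℕ, x k * (2 : ℝ) ^ (-(k : ℝ) / ((n : ℝ) + 1))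

lemma zeta_zx (n : ℕ) :
    zeta zx n = psi (ratio n) / ratio n / (((n : ℝ) + 1) * (1 - ratio n)) := by
  simp_rw [zeta, two_rpow_neg_div, tsum_zx_mul_pow (ratio_pos n) (ratio_lt_one n)]
  have := (ratio_lt_one n).ne'
  field_simp

lemma mul_one_sub_ratio_nonneg (n : ℕ) : 0 ≤ ((n : ℝ) + 1) * (1 - ratio n) := by
  have := ratio_lt_one n
  positivity

lemma third_div_le_zeta_zx (n : ℕ) :
    1 / 3 / (((n : ℝ) + 1) * (1 - ratio n)) ≤ zeta zx n := by
  rw [zeta_zx]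
  exact div_le_div_of_nonneg_right (third_le_psi_div (ratio_pos n) (ratio_lt_one n))
    (mul_one_sub_ratio_nonneg n)

lemma zeta_zx_le (n : ℕ) :
    zeta zx n ≤ 2 / 3 / √(ratio n) / (((n : ℝ) + 1) * (1 - ratio n)) := by
  rw [zeta_zx]
  exact div_le_div_of_nonneg_right (psi_div_le (ratio_pos n) (ratio_lt_one n))
    (mul_one_sub_ratio_nonneg n)

lemma tendsto_third_div_mul_one_sub_ratio :
    Tendsto (fun n : ℕ ↦ 1 / 3 / (((n : ℝ) + 1) * (1 - ratio n))) atTop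
      (𝓝 (1 / 3 / Real.log 2)) :=
  tendsto_const_nhds.div tendsto_mul_one_sub_ratio (Real.log_pos one_lt_two).ne'

lemma tendsto_two_thirds_div_sqrt_ratio_mul_one_sub_ratio :
    Tendsto (fun n : ℕ ↦ 2 / 3 / √(ratio n) / (((n : ℝ) + 1) * (1 - ratio n))) atTop
      (𝓝 (2 / 3 / Real.log 2)) := by
  have := ((tendsto_const_nhds (x := (2 / 3 : ℝ))).div tendsto_ratio.sqrt (by simp)).div
    tendsto_mul_one_sub_ratio (Real.log_pos one_lt_two).ne'
  rwa [Real.sqrt_one, div_one] at this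

end LacunaryZeta

open LacunaryZeta in
theorem zeta_banach_limit_zx_between (γ : LInf →L[ℝ] ℝ) (hγ : IsExtendedLimit γ)
    (Z : LInf → LInf)
    (hZ : ∀ (x : LInf) (n : ℕ),
      Z x n = (((n : ℝ) + 1))⁻¹ * ∑' k : ℕ, x k * (2 : ℝ) ^ (-(k : ℝ) / ((n : ℝ) + 1)))
    (B : LInf →L[ℝ] ℝ) (hB : ∀ x : LInf, B x = Real.log 2 * γ (Z x)) :
    1 / 3 ≤ B zx ∧ B zx ≤ 2 / 3 := by
  have hZ' : Z zx = zeta zx := funext (hZ zx)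
  have hlow : 1 / 3 / Real.log 2 ≤ γ (Z zx) :=
    hγ.le_map_of_tendsto_of_le (.of_forall fun n ↦ hZ' ▸ third_div_le_zeta_zx n)
      tendsto_third_div_mul_one_sub_ratio
  have hup : γ (Z zx) ≤ 2 / 3 / Real.log 2 :=
    hγ.map_le_of_le_of_tendsto (.of_forall fun n ↦ hZ' ▸ zeta_zx_le n)
      tendsto_two_thirds_div_sqrt_ratio_mul_one_sub_ratio
  have hlog : 0 < Real.log 2 := Real.log_pos one_lt_two
  rw [hB]
  constructor
  · calc (1 : ℝ) / 3 = Real.log 2 * (1 / 3 / Real.log 2) := by field_simp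
      _ ≤ Real.log 2 * γ (Z zx) := by gcongr
  · calc Real.log 2 * γ (Z zx) ≤ Real.log 2 * (2 / 3 / Real.log 2) := by gcongr
      _ = 2 / 3 := by field_simp

end
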